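/- Let n ≥ 2, c ∈ ℂ^×, and let x = (x_2,…,x_{2n−1}) be nonzero complex numbers such that all denominators occurring below are nonzero. Then ε_0(e_0^c(x)) = c^{−1}·ε_0(x), where ε_0(x) = x_{n+1}·S(x). -/

import Mathlib

/-!
Write `u_k = c·S_k + T_k`, so that `u_1 = S` and `u_n = c·S`. Then `e_0^c` multiplies `x_j`
(`j ≤ n`) by `S / u_j` and `x_{n+l}` (`1 ≤ l < n`) by `u_l / (c·S)`, hence
`x'_j / x'_{n+j-1} = c·S² r_j / (u_j u_{j-1}) = c·S·(S_j / u_j - S_{j-1} / u_{j-1})`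
with `r_j = x_j / x_{n+j-1}`. The sum telescopes to `S(x') = c·S·(S / (c·S) - 0) = S(x)`,
and `x'_{n+1} = x_{n+1} / c`.
-/

noncomputable section

/-- `Sf n x k = ∑_{j=2}^{k} x_j / x_{n+j-1}` (so `Sf n x 1 = 0`, `S(x) = Sf n x n`). -/
def Sf (n : ℕ) (x : ℕ → ℂ) (k : ℕ) : ℂ :=
  ∑ j ∈ Finset.Icc 2 k, x j / x (n + j - 1)

/-- `Tf n x k = ∑_{j=k+1}^{n} x_j / x_{n+j-1}` (so `Tf n x n = 0`). -/
def Tf (n : ℕ) (x : ℕ → ℂ) (k : ℕ) : ℂ :=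
  ∑ j ∈ Finset.Icc (k + 1) n, x j / x (n + j - 1)

/-- The rational map `e_0^c`. -/
def e0M (n : ℕ) (c : ℂ) (x : ℕ → ℂ) (k : ℕ) : ℂ :=
  if k ≤ n - 1 then x k * Sf n x n / (c * Sf n x k + Tf n x k)
  else if k ≤ n + 1 then x k / c
  else x k * (c * Sf n x (k - n) + Tf n x (k - n)) / (c * Sf n x n)

/-- `ε_0(x) = x_{n+1}·S(x)`. -/
def eps0 (n : ℕ) (x : ℕ → ℂ) : ℂ := x (n + 1) * Sf n x n

open Finset

theorem Finset.sum_Icc_add_one_sub_pred {M : Type*} [AddCommGroup M] (f : ℕ → M) {m k : ℕ}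
    (hmk : m ≤ k) : ∑ j ∈ Icc (m + 1) k, (f j - f (j - 1)) = f k - f m := by
  rw [Icc_add_one_left_eq_Ioc, ← Ico_add_one_add_one_eq_Ioc, ← Finset.sum_Ico_add' (c := 1)]
  simpa using Finset.sum_Ico_sub f hmk

theorem Sf_add_Tf (n : ℕ) (x : ℕ → ℂ) {k : ℕ} (hk : 1 ≤ k) (hkn : k ≤ n) :
    Sf n x k + Tf n x k = Sf n x n := by
  simp only [Sf, Tf, Icc_add_one_left_eq_Ioc, show (2 : ℕ) = 1 + 1 from rfl]
  exact sum_Ioc_consecutive _ hk hkn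

theorem Sf_sub_Sf_pred (n : ℕ) (x : ℕ → ℂ) {j : ℕ} (hj : 2 ≤ j) :
    Sf n x j - Sf n x (j - 1) = x j / x (n + j - 1) := by
  obtain ⟨k, rfl⟩ : ∃ k, j = k + 1 := ⟨j - 1, by omega⟩
  rw [Sf, Sf, sum_Icc_succ_top (by omega), Nat.add_sub_cancel, add_sub_cancel_left]

theorem Sf_one (n : ℕ) (x : ℕ → ℂ) : Sf n x 1 = 0 := by
  simp [Sf]

theorem Tf_self (n : ℕ) (x : ℕ → ℂ) : Tf n x n = 0 := by
  simp [Tf]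

/-- `u_k` in the notation of the header. -/
def e0Den (n : ℕ) (c : ℂ) (x : ℕ → ℂ) (k : ℕ) : ℂ := c * Sf n x k + Tf n x k

theorem e0Den_one {n : ℕ} (hn : 1 ≤ n) (c : ℂ) (x : ℕ → ℂ) : e0Den n c x 1 = Sf n x n := by
  rw [e0Den, ← Sf_add_Tf n x le_rfl hn, Sf_one, mul_zero, zero_add]

theorem e0Den_self (n : ℕ) (c : ℂ) (x : ℕ → ℂ) : e0Den n c x n = c * Sf n x n := by
  rw [e0Den, Tf_self, add_zero]

theorem e0M_of_le {n : ℕ} (c : ℂ) (x : ℕ → ℂ) (hS : Sf n x n ≠ 0) {k : ℕ} (hk : k ≤ n) :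
    e0M n c x k = x k * Sf n x n / e0Den n c x k := by
  by_cases hk' : k ≤ n - 1
  · rw [e0M, if_pos hk', e0Den]
  · obtain rfl : k = n := by omega
    rw [e0M, if_neg hk', if_pos (by omega), e0Den_self, mul_div_mul_right _ _ hS]

theorem e0M_add {n : ℕ} (c : ℂ) (x : ℕ → ℂ) (hS : Sf n x n ≠ 0) {l : ℕ} (hl : 1 ≤ l)
    (hln : l ≤ n - 1) :
    e0M n c x (n + l) = x (n + l) * e0Den n c x l / (c * Sf n x n) := by
  rcases Nat.lt_or_eq_of_le hl with hl | rfl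
  · rw [e0M, if_neg (by omega), if_neg (by omega), Nat.add_sub_cancel_left, e0Den]
  · rw [e0M, if_neg (by omega), if_pos le_rfl, e0Den_one (by omega), mul_div_mul_right _ _ hS]

/-- This makes the ratios `x'_j / x'_{n+j-1}` telescope; it holds because `T_k = S - S_k`. -/
theorem Sf_mul_e0Den_pred_sub {n j : ℕ} (c : ℂ) (x : ℕ → ℂ) (hj : 2 ≤ j) (hjn : j ≤ n) :
    Sf n x j * e0Den n c x (j - 1) - e0Den n c x j * Sf n x (j - 1)
      = Sf n x n * (x j / x (n + j - 1)) := by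
  have hT : ∀ k, 1 ≤ k → k ≤ n → Tf n x k = Sf n x n - Sf n x k := fun k hk hkn ↦
    eq_sub_of_add_eq' (Sf_add_Tf n x hk hkn)
  rw [e0Den, e0Den, hT j (by omega) hjn, hT (j - 1) (by omega) (by omega),
    ← Sf_sub_Sf_pred n x hj]
  ring

theorem e0M_div_e0M {n j : ℕ} (c : ℂ) (x : ℕ → ℂ) (hS : Sf n x n ≠ 0) (hj : 2 ≤ j)
    (hjn : j ≤ n) (hu : e0Den n c x j ≠ 0) (hu' : e0Den n c x (j - 1) ≠ 0) :
    e0M n c x j / e0M n c x (n + j - 1) = c * Sf n x n *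
      (Sf n x j / e0Den n c x j - Sf n x (j - 1) / e0Den n c x (j - 1)) := by
  rw [div_sub_div _ _ hu hu', Sf_mul_e0Den_pred_sub c x hj hjn, e0M_of_le c x hS hjn,
    show n + j - 1 = n + (j - 1) by omega, e0M_add c x hS (by omega) (by omega)]
  field_simp

theorem Sf_e0M {n : ℕ} (hn : 2 ≤ n) {c : ℂ} (hc : c ≠ 0) (x : ℕ → ℂ) (hS : Sf n x n ≠ 0)
    (hden : ∀ k, 2 ≤ k → k ≤ n - 1 → e0Den n c x k ≠ 0) :
    Sf n (e0M n c x) n = Sf n x n := by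
  have hu : ∀ k, 1 ≤ k → k ≤ n → e0Den n c x k ≠ 0 := by
    intro k hk hkn
    obtain rfl | rfl | hk : k = 1 ∨ k = n ∨ 2 ≤ k ∧ k ≤ n - 1 := by omega
    · rwa [e0Den_one (by omega)]
    · rw [e0Den_self]; exact mul_ne_zero hc hS
    · exact hden k hk.1 hk.2
  calc Sf n (e0M n c x) n
      = ∑ j ∈ Icc (1 + 1) n, c * Sf n x n *
          (Sf n x j / e0Den n c x j - Sf n x (j - 1) / e0Den n c x (j - 1)) :=
        sum_congr rfl fun j hj ↦ by
          rw [mem_Icc] at hj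
          exact e0M_div_e0M c x hS hj.1 hj.2 (hu j (by omega) hj.2) (hu _ (by omega) (by omega))
    _ = c * Sf n x n * (Sf n x n / e0Den n c x n - Sf n x 1 / e0Den n c x 1) := by
        rw [← mul_sum, sum_Icc_add_one_sub_pred (fun k ↦ Sf n x k / e0Den n c x k) (by omega)]
    _ = Sf n x n := by
        rw [e0Den_self, Sf_one, zero_div, sub_zero]
        field_simp

theorem stmt8_general (n : ℕ) (hn : 2 ≤ n) (c : ℂ) (hc : c ≠ 0) (x : ℕ → ℂ)
    (hS : Sf n x n ≠ 0)
    (hden : ∀ k, 2 ≤ k → k ≤ n - 1 → c * Sf n x k + Tf n x k ≠ 0) :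
    eps0 n (e0M n c x) = c⁻¹ * eps0 n x := by
  rw [eps0, eps0, Sf_e0M hn hc x hS hden, e0M_add c x hS le_rfl (by omega), e0Den_one (by omega),
    mul_div_mul_right _ _ hS]
  ring

/-- `ε_0(e_0^c(x)) = c⁻¹·ε_0(x)`. -/
theorem stmt8 (n : ℕ) (hn : 2 ≤ n) (c : ℂ) (hc : c ≠ 0) (x : ℕ → ℂ)
    (hx : ∀ k, 2 ≤ k → k ≤ 2 * n - 1 → x k ≠ 0)
    (hS : Sf n x n ≠ 0)
    (hden : ∀ k, 2 ≤ k → k ≤ n - 1 → c * Sf n x k + Tf n x k ≠ 0) :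
    eps0 n (e0M n c x) = c⁻¹ * eps0 n x :=
  stmt8_general n hn c hc x hS hden
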